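/- Strong soundness and completeness of WF_[→] with respect to neighborhood models: for every set Σ of L_[→]-formulas and every L_[→]-formula A, Σ ⊢_{WF_[→]} A if and only if Σ ⊨_{WF_[→]} A. -/

import Mathlib

/-!
Soundness: the root's neighborhoods are exactly the inclusions, so a theorem `A → B` gives
`⟦A⟧ ⊆ ⟦B⟧` in every model. With this each rule preserves validity, the equivalence rule because
`⟦A → C⟧` depends only on `⟦A⟧` and `⟦C⟧`.

Completeness: in the canonical model the worlds are the theories (sets of formulas containing all
theorems and closed under modus ponens with theorem major premise), and `B → C ∈ Δ` contributes
the pair of proof sets `(|B|, |C|)` to the neighborhoods of `Δ`. The principal theory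
`{E | ⊢ B → E}` shows that `|B| ⊆ |C|` forces `⊢ B → C`; hence formulas with equal proof sets are
provably equivalent, and the equivalence rule makes the truth lemma independent of which `B → C`
produced a pair. The consequences of `Σ` form a theory that forces `Σ` and nothing underivable.
-/

/-- Implicational formulas: built from propositional variables using only `→`. -/
inductive Fm : Type
  | var : ℕ → Fm
  | imp : Fm → Fm → Fm

/-- `chain [A₁,…,Aₙ] E` is the formula `A₁→(A₂→(⋯→(Aₙ→E)⋯))` (and `E` when n = 0). -/
def chain : List Fm → Fm → Fm
  | [], E => E
  | A :: L, E => Fm.imp A (chain L E)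

/-- Theorems of the Hilbert system `WF_[→]`. -/
inductive WFThm : Fm → Prop
  | id (A : Fm) : WFThm (A.imp A)
  | mp {A B : Fm} : WFThm A → WFThm (A.imp B) → WFThm B
  | afort {A : Fm} (B : Fm) : WFThm A → WFThm (B.imp A)
  | trans {A B C : Fm} : WFThm (A.imp B) → WFThm (B.imp C) → WFThm (A.imp C)
  | equiv {A B C D : Fm} :
      WFThm (A.imp B) → WFThm (B.imp A) → WFThm (C.imp D) → WFThm (D.imp C) →
      WFThm ((A.imp C).imp (B.imp D))

/-- Derivations from assumptions in `WF_[→]`: members of `Γ` and theorems may be used;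
rules (3), (4) and (5) only apply to theorems; modus ponens only with a theorem major
premise. -/
inductive WFDeriv (Γ : Set Fm) : Fm → Prop
  | hyp {A : Fm} : A ∈ Γ → WFDeriv Γ A
  | thm {A : Fm} : WFThm A → WFDeriv Γ A
  | wmp {A B : Fm} : WFDeriv Γ A → WFThm (A.imp B) → WFDeriv Γ B

/-- `[→]`-neighborhood models of subintuitionistic logic. -/
structure NbModel where
  W : Type
  g : W
  NB : W → Set (Set W × Set W)
  sub : ∀ (w : W) (X Y : Set W), X ⊆ Y → (X, Y) ∈ NB w
  rootNB : ∀ X Y : Set W, (X, Y) ∈ NB g ↔ X ⊆ Y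
  V : ℕ → W → Prop

/-- The truth set of a formula in a `[→]`-neighborhood model. -/
def truthSet (M : NbModel) : Fm → Set M.W
  | Fm.var p => {w | M.V p w}
  | Fm.imp A B => {w | (truthSet M A, truthSet M B) ∈ M.NB w}

lemma NbModel.subset_of_mem_root {M : NbModel} {A B : Fm}
    (h : M.g ∈ truthSet M (A.imp B)) : truthSet M A ⊆ truthSet M B :=
  (M.rootNB _ _).1 h

lemma WFThm.mem_truthSet {A : Fm} (h : WFThm A) (M : NbModel) (w : M.W) :
    w ∈ truthSet M A := by
  induction h generalizing w with
  | id A => exact M.sub w _ _ subset_rfl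
  | mp _ _ ihA ihAB => exact M.subset_of_mem_root (ihAB M.g) (ihA w)
  | afort B _ ih => exact M.sub w _ _ fun v _ => ih v
  | trans _ _ ih₁ ih₂ =>
    exact M.sub w _ _ ((M.subset_of_mem_root (ih₁ M.g)).trans (M.subset_of_mem_root (ih₂ M.g)))
  | equiv _ _ _ _ ih₁ ih₂ ih₃ ih₄ =>
    have hA := (M.subset_of_mem_root (ih₁ M.g)).antisymm (M.subset_of_mem_root (ih₂ M.g))
    have hC := (M.subset_of_mem_root (ih₃ M.g)).antisymm (M.subset_of_mem_root (ih₄ M.g))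
    exact M.sub w _ _ (by simp only [truthSet, hA, hC, subset_rfl])

lemma WFDeriv.sound {S : Set Fm} {A : Fm} (h : WFDeriv S A) (M : NbModel) (w : M.W)
    (hS : ∀ B ∈ S, w ∈ truthSet M B) : w ∈ truthSet M A := by
  induction h with
  | hyp hA => exact hS _ hA
  | thm hA => exact hA.mem_truthSet M w
  | wmp _ hAB ih => exact M.subset_of_mem_root (hAB.mem_truthSet M M.g) ih

structure WFTheory where
  carrier : Set Fm
  thm_mem : ∀ {A : Fm}, WFThm A → A ∈ carrier
  mem_of_imp : ∀ {A B : Fm}, A ∈ carrier → WFThm (A.imp B) → B ∈ carrier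

namespace WFTheory

def principal (B : Fm) : WFTheory where
  carrier := {E | WFThm (B.imp E)}
  thm_mem := WFThm.afort B
  mem_of_imp := WFThm.trans

def ofDeriv (S : Set Fm) : WFTheory where
  carrier := {E | WFDeriv S E}
  thm_mem := WFDeriv.thm
  mem_of_imp := WFDeriv.wmp

def proofSet (A : Fm) : Set WFTheory := {Δ | A ∈ Δ.carrier}

lemma wfThm_imp_of_proofSet_subset {B C : Fm} (h : proofSet B ⊆ proofSet C) :
    WFThm (B.imp C) :=
  @h (principal B) (WFThm.id B)

lemma wfThm_imp_imp_of_proofSet_eq {B B' C C' : Fm} (hB : proofSet B = proofSet B')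
    (hC : proofSet C = proofSet C') : WFThm ((B'.imp C').imp (B.imp C)) :=
  WFThm.equiv (wfThm_imp_of_proofSet_subset hB.ge) (wfThm_imp_of_proofSet_subset hB.le)
    (wfThm_imp_of_proofSet_subset hC.ge) (wfThm_imp_of_proofSet_subset hC.le)

end WFTheory

open WFTheory

/-- The root `none` is a separate world because its neighborhoods must be exactly the
inclusions; the inclusions are also neighborhoods of every theory, as `NbModel.sub` demands. -/
def canonicalNB : Option WFTheory → Set (Set (Option WFTheory) × Set (Option WFTheory))
  | none => {p | p.1 ⊆ p.2}
  | some Δ => {p | p.1 ⊆ p.2 ∨ ∃ B C, B.imp C ∈ Δ.carrier ∧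
      some ⁻¹' p.1 = proofSet B ∧ some ⁻¹' p.2 = proofSet C}

def canonicalModel : NbModel where
  W := Option WFTheory
  g := none
  NB := canonicalNB
  sub
    | none, _, _, h => h
    | some _, _, _, h => Or.inl h
  rootNB _ _ := Iff.rfl
  V p w := w ∈ some '' proofSet (Fm.var p)

lemma mem_canonicalNB_some {Δ : WFTheory} {X Y : Set (Option WFTheory)} :
    (X, Y) ∈ canonicalNB (some Δ) ↔ X ⊆ Y ∨ ∃ B C, B.imp C ∈ Δ.carrier ∧
      some ⁻¹' X = proofSet B ∧ some ⁻¹' Y = proofSet C :=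
  Iff.rfl

lemma preimage_truthSet_canonicalModel (A : Fm) :
    some ⁻¹' truthSet canonicalModel A = proofSet A := by
  induction A with
  | var p => exact Set.preimage_image_eq _ (Option.some_injective _)
  | imp B C ihB ihC =>
    ext Δ
    refine mem_canonicalNB_some.trans ?_
    rw [ihB, ihC]
    constructor
    · rintro (hsub | ⟨B', C', hmem, hB, hC⟩)
      · refine Δ.thm_mem (wfThm_imp_of_proofSet_subset ?_)
        rw [← ihB, ← ihC]
        exact Set.preimage_mono hsub
      · exact Δ.mem_of_imp hmem (wfThm_imp_imp_of_proofSet_eq hB hC)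
    · exact fun h => Or.inr ⟨B, C, h, rfl, rfl⟩

lemma WFDeriv.complete {S : Set Fm} {A : Fm}
    (h : ∀ (M : NbModel) (w : M.W), (∀ B ∈ S, w ∈ truthSet M B) → w ∈ truthSet M A) :
    WFDeriv S A := by
  have truth (E : Fm) : (some (ofDeriv S) : canonicalModel.W) ∈ truthSet canonicalModel E ↔
      WFDeriv S E :=
    Set.ext_iff.1 (preimage_truthSet_canonicalModel E) (ofDeriv S)
  exact (truth A).1 (h canonicalModel _ fun B hB => (truth B).2 (WFDeriv.hyp hB))

/-- Strong soundness and completeness of `WF_[→]` with respect to neighborhood models. -/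
theorem soundness_completeness_WF (S : Set Fm) (A : Fm) :
    WFDeriv S A ↔
      ∀ (M : NbModel) (w : M.W), (∀ B ∈ S, w ∈ truthSet M B) → w ∈ truthSet M A :=
  ⟨WFDeriv.sound, WFDeriv.complete⟩
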